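/- Let ≽ be a regular stochastic order on F(Ω). If f ≽ 0 and b : Ω → ℝ is bounded with b ≥ 0 pointwise, then f·b ≽ 0 (pointwise product). -/

import Mathlib

/-- A regular stochastic order on `F(Ω)`: a reflexive and transitive binary relation
satisfying (TRIV), (CONE), (CERT), (APPR) and (REST). -/
def IsRegularOrder {Ω : Type*} (R : (Ω → ℝ) → (Ω → ℝ) → Prop) : Prop :=
  Reflexive R ∧ Transitive R ∧
  ¬ R 0 1 ∧
  (∀ f₁ g₁ f₂ g₂ : Ω → ℝ, ∀ a₁ a₂ : ℝ, R f₁ g₁ → R f₂ g₂ → 0 ≤ a₁ → 0 ≤ a₂ →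
    R (a₁ • f₁ + a₂ • f₂) (a₁ • g₁ + a₂ • g₂)) ∧
  (∀ f : Ω → ℝ, (0 : Ω → ℝ) ≤ f → R f 0) ∧
  (∀ f : Ω → ℝ, (∀ n : ℕ, R (f + fun _ => (2 : ℝ)⁻¹ ^ n) 0) → R f 0) ∧
  (∀ (f : Ω → ℝ) (A : Set Ω), R f 0 → R (A.indicator f) 0)

/-!
Split `f = f·1_{f ≥ 0} + f·1_{f < 0}`; both pieces are `≽ 0` by (REST). The first times `b` is
pointwise nonnegative. For the second, `g = f·1_{f < 0} ≤ 0` and `0 ≤ b ≤ M` give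
`g·b ≥ M·g`, and `M·g ≽ 0` by (CONE), so `g·b ≽ 0`.
-/

namespace IsRegularOrder

variable {Ω : Type*} {R : (Ω → ℝ) → (Ω → ℝ) → Prop} {f g : Ω → ℝ}

theorem of_nonneg (hR : IsRegularOrder R) (hf : 0 ≤ f) : R f 0 :=
  hR.2.2.2.2.1 f hf

theorem indicator (hR : IsRegularOrder R) (hf : R f 0) (A : Set Ω) : R (A.indicator f) 0 :=
  hR.2.2.2.2.2.2 f A hf

theorem add (hR : IsRegularOrder R) (hf : R f 0) (hg : R g 0) : R (f + g) 0 := by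
  simpa using hR.2.2.2.1 f 0 g 0 1 1 hf hg zero_le_one zero_le_one

theorem smul (hR : IsRegularOrder R) (hf : R f 0) {a : ℝ} (ha : 0 ≤ a) : R (a • f) 0 := by
  simpa using hR.2.2.2.1 f 0 f 0 a 0 hf hf ha le_rfl

theorem of_le (hR : IsRegularOrder R) (hg : R g 0) (hgf : g ≤ f) : R f 0 := by
  simpa using hR.add (hR.of_nonneg (sub_nonneg.mpr hgf)) hg

theorem mul_of_nonpos (hR : IsRegularOrder R) (hg : R g 0) (hg_nonpos : g ≤ 0) {b : Ω → ℝ}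
    {M : ℝ} (hM : 0 ≤ M) (hbM : ∀ ω, b ω ≤ M) : R (g * b) 0 :=
  hR.of_le (hR.smul hg hM) fun ω => by
    simpa [mul_comm] using mul_le_mul_of_nonpos_left (hbM ω) (hg_nonpos ω)

end IsRegularOrder

theorem stmt_3_general {Ω : Type*} (R : (Ω → ℝ) → (Ω → ℝ) → Prop)
    (hR : IsRegularOrder R) (f b : Ω → ℝ)
    (hf : R f 0)
    (hbdd : ∃ M : ℝ, ∀ ω, |b ω| ≤ M)
    (hbnn : ∀ ω, 0 ≤ b ω) :
    R (f * b) 0 := by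
  obtain ⟨M, hM⟩ := hbdd
  set P : Set Ω := {ω | 0 ≤ f ω}
  have hpos : R (P.indicator f * b) 0 :=
    hR.of_nonneg fun ω => mul_nonneg (Set.indicator_nonneg (fun _ h => h) ω) (hbnn ω)
  have hneg : R (Pᶜ.indicator f * b) 0 :=
    hR.mul_of_nonpos (hR.indicator hf Pᶜ)
      (Set.indicator_nonpos fun _ h => le_of_lt (not_le.mp h)) (le_max_right M 0)
      fun ω => (le_abs_self _).trans ((hM ω).trans (le_max_left M 0))
  simpa [← add_mul, Set.indicator_self_add_compl] using hR.add hpos hneg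

/-- If `f ≽ 0` and `b` is bounded and nonnegative then `f·b ≽ 0`. -/
theorem stmt_3 {Ω : Type*} [Nonempty Ω] (R : (Ω → ℝ) → (Ω → ℝ) → Prop)
    (hR : IsRegularOrder R) (f b : Ω → ℝ)
    (hf : R f 0)
    (hbdd : ∃ M : ℝ, ∀ ω, |b ω| ≤ M)
    (hbnn : ∀ ω, 0 ≤ b ω) :
    R (f * b) 0 :=
  stmt_3_general R hR f b hf hbdd hbnn
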